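/- arXiv:2210.03862 — 4 statements merged into one kernel-verified Lean document; each statement's English description precedes it below -/
import Mathlib

section
/- (Choi's Theorem) Let φ : Mₙ(ℂ) → M_k(ℂ) be a completely positive linear map. Then there exist matrices a₁, …, a_{nk} ∈ M_{n,k}(ℂ) (n×k complex matrices) such that φ(x) = Σ_{i=1}^{nk} aᵢ* x aᵢ for all x ∈ Mₙ(ℂ), where aᵢ* denotes the conjugate transpose. -/
open scoped ComplexOrder

/-- The `m`-th amplification `id_{Mₘ} ⊗ φ` of a map between complex matrix algebras,
acting blockwise on `Mₘ(Mₙ(ℂ)) ≅ M_{mn}(ℂ)`. -/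
def matAmp {n k : ℕ} (m : ℕ) (φ : Matrix (Fin n) (Fin n) ℂ → Matrix (Fin k) (Fin k) ℂ)
    (x : Matrix (Fin m × Fin n) (Fin m × Fin n) ℂ) : Matrix (Fin m × Fin k) (Fin m × Fin k) ℂ :=
  Matrix.of fun ip jq => φ (Matrix.of fun p q => x (ip.1, p) (jq.1, q)) ip.2 jq.2

/-- Complete positivity for a map between complex matrix algebras: every amplification
sends positive semidefinite matrices to positive semidefinite matrices. -/
def IsCompletelyPositiveMat {n k : ℕ}
    (φ : Matrix (Fin n) (Fin n) ℂ → Matrix (Fin k) (Fin k) ℂ) : Prop :=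
  ∀ (m : ℕ) (x : Matrix (Fin m × Fin n) (Fin m × Fin n) ℂ),
    x.PosSemidef → (matAmp m φ x).PosSemidef

/-!
Choi's argument: apply `id ⊗ φ` to the positive matrix `Σᵢⱼ Eᵢⱼ ⊗ Eᵢⱼ = ω ω*`, where
`ω = Σᵢ eᵢ ⊗ eᵢ`. The result is the Choi matrix `C = Σᵢⱼ Eᵢⱼ ⊗ φ(Eᵢⱼ)`, which is therefore
positive and factors as `C = B* B` with `B` of size `nk × nk`. Reading each row of `B` as an
`n × k` matrix `aᵤ` gives `φ(Eᵢⱼ) = Σᵤ aᵤ* Eᵢⱼ aᵤ`, and linearity extends this to all `x`.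
-/

open Matrix

theorem Matrix.PosSemidef.exists_eq_conjTranspose_mul_self {𝕜 n : Type*} [RCLike 𝕜] [Fintype n]
    {A : Matrix n n 𝕜} (hA : A.PosSemidef) : ∃ B : Matrix n n 𝕜, A = Bᴴ * B := by
  classical
  open scoped MatrixOrder Matrix.Norms.L2Operator in
  exact CStarAlgebra.nonneg_iff_eq_star_mul_self.mp hA.nonneg

section Choi

variable {R m n p q : Type*}

theorem Matrix.linearMap_apply_eq_sum_single [DecidableEq m] [DecidableEq n] [Fintype m]
    [Fintype n] [CommSemiring R] (f : Matrix m n R →ₗ[R] Matrix p q R) (x : Matrix m n R)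
    (s : p) (t : q) : f x s t = ∑ i, ∑ j, x i j * f (single i j 1) s t := by
  conv_lhs => rw [matrix_eq_sum_single x]
  simp only [map_sum, Matrix.sum_apply]
  refine Finset.sum_congr rfl fun i _ => Finset.sum_congr rfl fun j _ => ?_
  rw [← smul_eq_mul, ← smul_apply, ← map_smul, smul_single, smul_eq_mul, mul_one]

def choiMatrix [DecidableEq m] [Zero R] [One R] (φ : Matrix m m R → Matrix n n R) :
    Matrix (m × n) (m × n) R :=
  of fun is jt => φ (single is.1 jt.1 1) is.2 jt.2

theorem eq_sum_conjTranspose_mul_mul_of_choiMatrix_eq [DecidableEq m] [Fintype m]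
    [CommSemiring R] [StarRing R] {ι : Type*} [Fintype ι] (φ : Matrix m m R →ₗ[R] Matrix n n R)
    (B : Matrix ι (m × n) R) (hB : choiMatrix φ = Bᴴ * B) (x : Matrix m m R) :
    φ x = ∑ u, (of (Function.curry (B u)))ᴴ * x * of (Function.curry (B u)) := by
  ext s t
  have hchoi (i j : m) : φ (single i j 1) s t = ∑ u, star (B u (i, s)) * B u (j, t) := by
    simpa [choiMatrix, mul_apply] using congr_fun₂ hB (i, s) (j, t)
  simp only [linearMap_apply_eq_sum_single φ x, hchoi, Matrix.sum_apply, mul_apply,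
    conjTranspose_apply, of_apply, Function.curry_apply, Finset.mul_sum, Finset.sum_mul]
  rw [Finset.sum_comm]
  refine (Finset.sum_congr rfl fun j _ => Finset.sum_comm).trans Finset.sum_comm |>.trans ?_
  refine Finset.sum_congr rfl fun u _ => Finset.sum_congr rfl fun j _ =>
    Finset.sum_congr rfl fun i _ => ?_
  ring

end Choi

theorem matAmp_vecMulVec_eq_choiMatrix {n k : ℕ}
    (φ : Matrix (Fin n) (Fin n) ℂ → Matrix (Fin k) (Fin k) ℂ) :
    let ω : Fin n × Fin n → ℂ := fun ip => if ip.1 = ip.2 then 1 else 0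
    matAmp n φ (vecMulVec ω (star ω)) = choiMatrix φ := by
  intro ω
  ext ⟨i, s⟩ ⟨j, t⟩
  simp only [matAmp, choiMatrix, of_apply]
  congr
  ext p q
  simp only [ω, vecMulVec_apply, Pi.star_apply]
  split_ifs <;> simp_all

theorem IsCompletelyPositiveMat.posSemidef_choiMatrix {n k : ℕ}
    {φ : Matrix (Fin n) (Fin n) ℂ → Matrix (Fin k) (Fin k) ℂ} (hφ : IsCompletelyPositiveMat φ) :
    (choiMatrix φ).PosSemidef :=
  matAmp_vecMulVec_eq_choiMatrix φ ▸ hφ n _ (posSemidef_vecMulVec_self_star _)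

/-- Choi's theorem: every completely positive map `φ : Mₙ(ℂ) → M_k(ℂ)` has a
Kraus decomposition `φ(x) = Σ_{i=1}^{nk} aᵢ* x aᵢ` with `aᵢ ∈ M_{n,k}(ℂ)`. -/
theorem stmt_5 {n k : ℕ} (φ : Matrix (Fin n) (Fin n) ℂ →ₗ[ℂ] Matrix (Fin k) (Fin k) ℂ)
    (hφ : IsCompletelyPositiveMat (⇑φ)) :
    ∃ a : Fin (n * k) → Matrix (Fin n) (Fin k) ℂ,
      ∀ x, φ x = ∑ i, (a i).conjTranspose * x * a i := by
  obtain ⟨B, hB⟩ := hφ.posSemidef_choiMatrix.exists_eq_conjTranspose_mul_self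
  refine ⟨fun r => of (Function.curry (B (finProdFinEquiv.symm r))), fun x => ?_⟩
  rw [eq_sum_conjTranspose_mul_mul_of_choiMatrix_eq φ B hB x]
  exact (finProdFinEquiv.symm.sum_comp fun u =>
    (of (Function.curry (B u)))ᴴ * x * of (Function.curry (B u))).symm
end

section
/- Let A be a unital C*-algebra, x₁, …, xₙ ∈ A, and λ₁, …, λₙ ∈ ℂ. Set x₀ = 1, λ₀ = 1, and x_{−i} = xᵢ*, λ_{−i} = conj(λᵢ) for i = 1, …, n. Then the following are equivalent: (i) for all complex numbers a_{−n}, …, a₀, …, aₙ with |aᵢ| ≤ 1 for each i, one has |Σ_{i=−n}^{n} aᵢ λᵢ| ≤ ‖Σ_{i=−n}^{n} aᵢ xᵢ‖; (ii) there exists a state φ on A with φ(xᵢ) = λᵢ for all i = 1, …, n. -/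
/-!
(ii) ⇒ (i): a state is star-preserving and, by Cauchy–Schwarz for `(a, b) ↦ φ (a⋆ b)`,
contractive, so it maps `a₀ + ∑ aᵢ xᵢ + ∑ bᵢ xᵢ⋆` to `a₀ + ∑ aᵢ λᵢ + ∑ bᵢ conj λᵢ` without
increasing norms.

(i) ⇒ (ii): by homogeneity the inequality holds for all coefficients, so
`a₀ + ∑ aᵢ xᵢ + ∑ bᵢ xᵢ⋆ ↦ a₀ + ∑ aᵢ λᵢ + ∑ bᵢ conj λᵢ` is a well-defined functional of norm at
most `1` on the operator system spanned by `1, xᵢ, xᵢ⋆`. A Hahn–Banach extension of it is a unital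
contraction `φ` on `A`, and unital contractions are positive: for self-adjoint `y` and real `t`,
`|φ y + i t|² ≤ ‖y + i t‖² ≤ ‖y‖² + t²` forces `φ y` to be real, and for `z ≥ 0`,
`|‖z‖ - φ z| ≤ ‖‖z‖ - z‖ ≤ ‖z‖` forces `re φ z ≥ 0`.
-/

open scoped ComplexOrder

section Extension

variable {𝕜 V E : Type*} [RCLike 𝕜] [NormedAddCommGroup E] [NormedSpace 𝕜 E]

lemma LinearMap.norm_le_of_forall_norm_le_one [NormedAddCommGroup V] [NormedSpace 𝕜 V]
    {F : Type*} [SeminormedAddCommGroup F] [NormedSpace 𝕜 F] (T : V →ₗ[𝕜] E) (S : V →ₗ[𝕜] F)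
    (h : ∀ v, ‖v‖ ≤ 1 → ‖S v‖ ≤ ‖T v‖) (v : V) : ‖S v‖ ≤ ‖T v‖ := by
  rcases eq_or_ne v 0 with rfl | hv
  · simp
  have hc : 0 < ‖(‖v‖⁻¹ : 𝕜)‖ := by simpa using hv
  have := h ((‖v‖⁻¹ : 𝕜) • v) (by simp [norm_smul, hv])
  rw [map_smul, map_smul, norm_smul, norm_smul] at this
  exact le_of_mul_le_mul_left this hc

lemma LinearMap.exists_strongDual_comp_eq_of_norm_le [AddCommGroup V] [Module 𝕜 V]
    (T : V →ₗ[𝕜] E) (S : V →ₗ[𝕜] 𝕜) (h : ∀ v, ‖S v‖ ≤ ‖T v‖) :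
    ∃ g : StrongDual 𝕜 E, ‖g‖ ≤ 1 ∧ ∀ v, g (T v) = S v := by
  obtain ⟨R, hR⟩ := T.rangeRestrict.exists_rightInverse_of_surjective T.range_rangeRestrict
  have hTR (w : LinearMap.range T) : T (R w) = w := congrArg Subtype.val (LinearMap.congr_fun hR w)
  let g₀ : StrongDual 𝕜 (LinearMap.range T) :=
    (S ∘ₗ R).mkContinuous 1 fun w => by simpa [hTR] using h (R w)
  obtain ⟨g, hg, hg_norm⟩ := exists_extension_norm_eq (LinearMap.range T) g₀
  refine ⟨g, hg_norm ▸ LinearMap.mkContinuous_norm_le _ zero_le_one _, fun v => ?_⟩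
  -- `R (T v) - v` lies in the kernel of `T`, hence in that of `S`
  have hker : S (R (T.rangeRestrict v) - v) = 0 := by
    simpa [hTR] using h (R (T.rangeRestrict v) - v)
  rw [map_sub, sub_eq_zero] at hker
  simpa [g₀, hker] using hg (T.rangeRestrict v)

end Extension

section CStarAlgebra

open Complex

variable {A : Type*} [CStarAlgebra A]

lemma IsSelfAdjoint.norm_add_I_smul_one_sq_le [Nontrivial A] {y : A} (hy : IsSelfAdjoint y)
    (t : ℝ) : ‖y + (t * I) • (1 : A)‖ ^ 2 ≤ ‖y‖ ^ 2 + t ^ 2 := by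
  set e := y + (t * I) • (1 : A)
  have he : star e * e = y * y + ((t ^ 2 : ℝ) : ℂ) • (1 : A) := by
    simp only [e, star_add, hy.star_eq, star_smul, star_one, add_mul, mul_add, smul_mul_assoc,
      mul_smul_comm, mul_one, one_mul]
    match_scalars <;> simp [Complex.ext_iff, pow_two]
  calc ‖e‖ ^ 2 = ‖star e * e‖ := by rw [CStarRing.norm_star_mul_self, sq]
    _ ≤ ‖y * y‖ + ‖((t ^ 2 : ℝ) : ℂ) • (1 : A)‖ := he ▸ norm_add_le _ _
    _ = ‖y‖ ^ 2 + t ^ 2 := by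
      rw [hy.norm_mul_self, norm_smul, norm_real, Real.norm_of_nonneg (sq_nonneg t), norm_one, sq,
        mul_one]

namespace LinearMap

variable (φ : A →ₗ[ℂ] ℂ) (h1 : φ 1 = 1) (hφ : ∀ y, ‖φ y‖ ≤ ‖y‖)
include h1 hφ

lemma im_apply_eq_zero_of_norm_apply_le {y : A} (hy : IsSelfAdjoint y) : (φ y).im = 0 := by
  have : Nontrivial A := ⟨1, 0, fun h => by simp [h] at h1⟩
  have key (t : ℝ) : ((φ y).im + t) ^ 2 ≤ ‖y‖ ^ 2 + t ^ 2 := calc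
    ((φ y).im + t) ^ 2 = |(φ (y + (t * I) • (1 : A))).im| ^ 2 := by simp [h1]
    _ ≤ ‖φ (y + (t * I) • (1 : A))‖ ^ 2 := by gcongr; exact abs_im_le_norm _
    _ ≤ ‖y + (t * I) • (1 : A)‖ ^ 2 := by gcongr; exact hφ _
    _ ≤ ‖y‖ ^ 2 + t ^ 2 := hy.norm_add_I_smul_one_sq_le t
  -- `key` says `b² + 2bt ≤ ‖y‖²` for `b = im φ(y)` and all real `t`, which forces `b = 0`
  by_contra hb
  have := key ((‖y‖ ^ 2 + 1) / (2 * (φ y).im))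
  have : (φ y).im * ((‖y‖ ^ 2 + 1) / (2 * (φ y).im)) = (‖y‖ ^ 2 + 1) / 2 := by field_simp
  nlinarith [sq_nonneg (φ y).im]

lemma apply_nonneg_of_norm_apply_le [PartialOrder A] [StarOrderedRing A] {z : A} (hz : 0 ≤ z) :
    0 ≤ φ z := by
  have : Nontrivial A := ⟨1, 0, fun h => by simp [h] at h1⟩
  have hle : ‖algebraMap ℝ A ‖z‖ - z‖ ≤ ‖z‖ := by
    refine (CStarAlgebra.norm_le_norm_of_nonneg_of_le ?_ (sub_le_self _ hz)).trans ?_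
    · exact sub_nonneg.mpr hz.isSelfAdjoint.le_algebraMap_norm_self
    · rw [norm_algebraMap', norm_norm]
  have hφ' : φ (algebraMap ℝ A ‖z‖ - z) = ‖z‖ - φ z := by
    simp [Algebra.algebraMap_eq_smul_one, ← Complex.coe_smul, h1]
  have hre := (abs_re_le_norm (‖z‖ - φ z)).trans (hφ' ▸ (hφ _).trans hle)
  rw [sub_re, ofReal_re] at hre
  refine Complex.nonneg_iff.mpr ⟨?_,
    (im_apply_eq_zero_of_norm_apply_le φ h1 hφ hz.isSelfAdjoint).symm⟩
  linarith [(abs_le.mp hre).2]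

end LinearMap

namespace PositiveLinearMap

variable [PartialOrder A] [StarOrderedRing A]

lemma norm_apply_le_of_map_one (f : A →ₚ[ℂ] ℂ) (h1 : f 1 = 1) (z : A) : ‖f z‖ ≤ ‖z‖ := by
  -- Cauchy–Schwarz for the semi-inner product `⟪a, b⟫ = f (a⋆ b)`
  have hcs := norm_inner_le_norm (𝕜 := ℂ) (f.toPreGNS 1) (f.toPreGNS z)
  rw [preGNS_inner_def, ofPreGNS_toPreGNS, ofPreGNS_toPreGNS, star_one, one_mul] at hcs
  have hsq (a : A) : ‖f.toPreGNS a‖ ^ 2 = (f (star a * a)).re := by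
    exact_mod_cast congrArg re (f.preGNS_norm_sq (f.toPreGNS a))
  have hzz : (f (star z * z)).re ≤ ‖z‖ ^ 2 := calc
    (f (star z * z)).re ≤ ‖f (star z * z)‖ := re_le_norm _
    _ ≤ ‖f 1‖ * ‖star z * z‖ := f.norm_apply_le_of_nonneg _ (star_mul_self_nonneg z)
    _ = ‖z‖ ^ 2 := by rw [h1, norm_one, one_mul, CStarRing.norm_star_mul_self, sq]
  refine pow_le_pow_iff_left₀ (norm_nonneg _) (norm_nonneg _) two_ne_zero |>.mp ?_
  calc ‖f z‖ ^ 2 ≤ (‖f.toPreGNS 1‖ * ‖f.toPreGNS z‖) ^ 2 := by gcongr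
    _ ≤ ‖z‖ ^ 2 := by rw [mul_pow, hsq, hsq, star_one, one_mul, h1, one_re, one_mul]; exact hzz

end PositiveLinearMap

end CStarAlgebra

section OperatorSystem

variable (R : Type*) {B C : Type*} [CommSemiring R] [AddCommMonoid B] [Module R B] [One B] [Star B]
  {n : ℕ}

noncomputable def operatorSystemCombination (x : Fin n → B) :
    R × (Fin n → R) × (Fin n → R) →ₗ[R] B :=
  (LinearMap.toSpanSingleton R B 1).coprod
    ((Fintype.linearCombination R x).coprod (Fintype.linearCombination R (star x)))

lemma operatorSystemCombination_apply (x : Fin n → B) (a₀ : R) (a b : Fin n → R) :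
    operatorSystemCombination R x (a₀, a, b) = a₀ • 1 + ∑ i, a i • x i + ∑ i, b i • star (x i) := by
  simp [operatorSystemCombination, Fintype.linearCombination_apply, add_assoc]

variable {R}

lemma map_operatorSystemCombination [AddCommMonoid C] [Module R C] [One C] [Star C]
    {F : Type*} [FunLike F B C] [LinearMapClass F R B C] [StarHomClass F B C] (f : F)
    (hf : f 1 = 1) (x : Fin n → B) (v : R × (Fin n → R) × (Fin n → R)) :
    f (operatorSystemCombination R x v) = operatorSystemCombination R (f ∘ x) v := by
  obtain ⟨a₀, a, b⟩ := v
  simp [operatorSystemCombination_apply, map_sum, map_star, hf]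

end OperatorSystem

lemma operatorSystemCombination_complex_apply {n : ℕ} (l : Fin n → ℂ) (a₀ : ℂ) (a b : Fin n → ℂ) :
    operatorSystemCombination ℂ l (a₀, a, b) =
      a₀ + ∑ i, a i * l i + ∑ i, b i * starRingEnd ℂ (l i) := by
  simp [operatorSystemCombination_apply]

/-- given `x₁, …, xₙ` in a unital C*-algebra `A` and scalars `λ₁, …, λₙ`,
the norm condition `|a₀ + Σ aᵢλᵢ + Σ bᵢ conj(λᵢ)| ≤ ‖a₀·1 + Σ aᵢxᵢ + Σ bᵢxᵢ*‖` for all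
coefficients in the closed unit disk holds if and only if there is a state `φ` on `A` with
`φ(xᵢ) = λᵢ` for all `i`.  (A state is a unital linear functional sending positive
elements, i.e. elements of the form `w* w`, to nonnegative reals.) -/
theorem stmt_13 {A : Type*} [CStarAlgebra A] {n : ℕ} (x : Fin n → A) (l : Fin n → ℂ) :
    (∀ (a₀ : ℂ) (a b : Fin n → ℂ), ‖a₀‖ ≤ 1 → (∀ i, ‖a i‖ ≤ 1) → (∀ i, ‖b i‖ ≤ 1) →
      ‖a₀ + ∑ i, a i * l i + ∑ i, b i * (starRingEnd ℂ) (l i)‖ ≤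
        ‖a₀ • (1 : A) + ∑ i, a i • x i + ∑ i, b i • star (x i)‖) ↔
    (∃ φ : A →ₗ[ℂ] ℂ, φ 1 = 1 ∧ (∀ z : A, (∃ w : A, z = star w * w) → 0 ≤ φ z) ∧
      ∀ i, φ (x i) = l i) := by
  -- in the spectral order of `A`, `0 ≤ z` iff `z = w⋆ w` for some `w`
  let _ := CStarAlgebra.spectralOrder A
  have _ := CStarAlgebra.spectralOrderedRing A
  simp only [← CStarAlgebra.nonneg_iff_eq_star_mul_self, ← operatorSystemCombination_apply,
    ← operatorSystemCombination_complex_apply]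
  constructor
  · intro h
    have hle := LinearMap.norm_le_of_forall_norm_le_one (operatorSystemCombination ℂ x)
      (operatorSystemCombination ℂ l) fun ⟨a₀, a, b⟩ hv => by
        simp only [norm_prod_le_iff, pi_norm_le_iff_of_nonneg zero_le_one] at hv
        exact h a₀ a b hv.1 hv.2.1 hv.2.2
    obtain ⟨g, hg_norm, hg⟩ := LinearMap.exists_strongDual_comp_eq_of_norm_le _ _ hle
    have hg1 : g 1 = 1 := by simpa [operatorSystemCombination_apply] using hg (1, 0, 0)
    refine ⟨g, hg1, fun z hz => ?_, fun i => ?_⟩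
    · exact LinearMap.apply_nonneg_of_norm_apply_le (g : A →ₗ[ℂ] ℂ) hg1
        (fun y => by simpa using g.le_of_opNorm_le hg_norm y) hz
    · simpa [operatorSystemCombination_apply, Pi.single_apply] using hg (0, Pi.single i 1, 0)
  · rintro ⟨φ, hφ1, hφ_nonneg, hφx⟩ a₀ a b - - -
    let f := PositiveLinearMap.mk₀ φ hφ_nonneg
    have hfx : f ∘ x = l := funext hφx
    calc ‖operatorSystemCombination ℂ l (a₀, a, b)‖
        = ‖f (operatorSystemCombination ℂ x (a₀, a, b))‖ := by
          rw [map_operatorSystemCombination f hφ1, hfx]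
      _ ≤ _ := f.norm_apply_le_of_map_one hφ1 _
end

section
/- For every n ≥ 1 and every δ > 0 there exists ε > 0 such that the following holds: for every unital C*-algebra A and every positive element X of the C*-algebra Mₙ(A) of n×n matrices over A satisfying ‖X‖ ≤ 1 and ‖Σᵢ Xᵢᵢ − 1‖ ≤ ε, there exists a positive element X' of Mₙ(A) with Σᵢ X'ᵢᵢ = 1 and ‖X − X'‖ ≤ δ. -/
/-!
Write `t = Σᵢ Xᵢᵢ`. Since `‖t - 1‖ ≤ ε ≤ 1/2`, the spectrum of `t` lies in `[1/2, 3/2]`, so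
`s = t^{-1/2}` exists by functional calculus, is self-adjoint, satisfies `s t s = 1`, and
`‖s - 1‖ ≤ ‖t - 1‖`. With `D = diag(s, …, s)` the matrix `X' = D X D = (w D)^* (w D)` is positive
with `Σᵢ X'ᵢᵢ = s t s = 1`, and `X - D X D = E X + X E - E X E` for `E = 1 - D`.

It remains to see `N (1 - D) ≤ ‖1 - s‖`, i.e. that `a ↦ N (diag(a, …, a))` is dominated by the norm
of `A` on self-adjoint elements. The C*-identity gives `N (b ^ 2 ^ k) = N b ^ 2 ^ k` for
self-adjoint `b`, so by Gelfand's formula in the completion of `(Mₙ(A), N)` the number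
`N (diag b)` is a spectral radius there; spectra only shrink under algebra homomorphisms, and
the spectral radius of `b` in `A` is `‖b‖`.
-/

universe u

/-- `N` is a C*-norm on the matrix algebra `Matrix ι ι A`: a (complex-homogeneous)
norm which is submultiplicative and satisfies the C*-identity.  Such a norm is unique,
so this characterizes "the" C*-norm of `Mₙ(A)`. -/
def IsCStarNorm {A : Type u} [Ring A] [StarRing A] [Algebra ℂ A]
    {ι : Type} [Fintype ι] (N : Matrix ι ι A → ℝ) : Prop :=
  (∀ x, N x = 0 ↔ x = 0) ∧
  (∀ x y, N (x + y) ≤ N x + N y) ∧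
  (∀ (c : ℂ) (x), N (c • x) = ‖c‖ * N x) ∧
  (∀ x y, N (x * y) ≤ N x * N y) ∧
  (∀ x, N (star x * x) = N x ^ 2)

open scoped ENNReal

theorem AlgHom.spectralRadius_apply_le {𝕜 A B : Type*} [NormedField 𝕜] [Ring A] [Ring B]
    [Algebra 𝕜 A] [Algebra 𝕜 B] (ψ : A →ₐ[𝕜] B) (a : A) :
    spectralRadius 𝕜 (ψ a) ≤ spectralRadius 𝕜 a :=
  biSup_mono fun _ hk => AlgHom.spectrum_apply_subset ψ a hk

section PowTwoPow

variable {B : Type*} [NormedRing B] [NormedAlgebra ℂ B]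

theorem spectralRadius_eq_nnnorm_of_pow_two_pow [CompleteSpace B] {x : B}
    (hx : ∀ k : ℕ, ‖x ^ 2 ^ k‖ = ‖x‖ ^ 2 ^ k) : spectralRadius ℂ x = ‖x‖₊ := by
  refine tendsto_nhds_unique ((spectrum.pow_nnnorm_pow_one_div_tendsto_nhds_spectralRadius x).comp
    (tendsto_pow_atTop_atTop_of_one_lt one_lt_two)) ?_
  refine tendsto_const_nhds.congr fun k => ?_
  have hk : ‖x ^ 2 ^ k‖₊ = ‖x‖₊ ^ 2 ^ k := NNReal.eq <| by simpa using hx k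
  rw [Function.comp_apply, hk, ENNReal.coe_pow, ← ENNReal.rpow_natCast, ← ENNReal.rpow_mul]
  simp

open UniformSpace in
theorem nnnorm_le_spectralRadius_of_pow_two_pow {x : B}
    (hx : ∀ k : ℕ, ‖x ^ 2 ^ k‖ = ‖x‖ ^ 2 ^ k) : (‖x‖₊ : ℝ≥0∞) ≤ spectralRadius ℂ x := by
  let _ : NormedAlgebra ℂ (Completion B) := { norm_smul_le := norm_smul_le }
  let ι : B →ₐ[ℂ] Completion B := { Completion.coeRingHom with commutes' := fun _ => rfl }
  have hι : ∀ y, ‖ι y‖ = ‖y‖ := Completion.norm_coe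
  have hιx : spectralRadius ℂ (ι x) = ‖ι x‖₊ :=
    spectralRadius_eq_nnnorm_of_pow_two_pow fun k => by rw [← map_pow, hι, hι, hx]
  calc (‖x‖₊ : ℝ≥0∞) = ‖ι x‖₊ := by congr 1; exact NNReal.eq (hι x).symm
    _ = spectralRadius ℂ (ι x) := hιx.symm
    _ ≤ spectralRadius ℂ x := ι.spectralRadius_apply_le x

end PowTwoPow

theorem IsSelfAdjoint.apply_pow_two_pow {M : Type*} [Monoid M] [StarMul M] {f : M → ℝ}
    (hf : ∀ x, f (star x * x) = f x ^ 2) {x : M} (hx : IsSelfAdjoint x) (k : ℕ) :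
    f (x ^ 2 ^ k) = f x ^ 2 ^ k := by
  induction k with
  | zero => simp
  | succ k ih =>
    have hsq : x ^ 2 ^ (k + 1) = star (x ^ 2 ^ k) * x ^ 2 ^ k := by
      rw [(hx.pow _).star_eq, ← sq, ← pow_mul, ← pow_succ]
    rw [hsq, hf, ih, ← pow_mul, ← pow_succ]

theorem map_sub_mul_mul_le {R F : Type*} [Ring R] [FunLike F R ℝ] [RingSeminormClass F R ℝ]
    (f : F) (x d : R) : f (x - d * x * d) ≤ f (1 - d) * f x * (2 + f (1 - d)) := by
  set e := 1 - d
  have hdecomp : x - d * x * d = e * x + x * e - e * x * e := by simp only [e]; noncomm_ring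
  have hexe : f (e * x * e) ≤ f e * f x * f e :=
    (map_mul_le_mul f _ _).trans (by gcongr; exact map_mul_le_mul f _ _)
  calc f (x - d * x * d) ≤ f (e * x) + f (x * e) + f (e * x * e) := by
        rw [hdecomp]
        exact (map_sub_le_add f _ _).trans (by gcongr; exact map_add_le_add f _ _)
    _ ≤ f e * f x + f x * f e + f e * f x * f e := by
        gcongr <;> exact map_mul_le_mul f _ _
    _ = f e * f x * (2 + f e) := by ring

theorem Real.abs_inv_sqrt_sub_one_le {x : ℝ} (hx : 1 / 2 ≤ x) : |(√x)⁻¹ - 1| ≤ |x - 1| := by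
  have hy : 1 / 2 ≤ √x := Real.le_sqrt_of_sq_le (by linarith)
  have hyy : √x ^ 2 = x := Real.sq_sqrt (by linarith)
  have hy0 : 0 < √x := by linarith
  have hdiff : (√x)⁻¹ - 1 = (1 - √x) / √x := by field_simp
  have hx1 : |x - 1| = |1 - √x| * (√x + 1) := by
    rw [show x - 1 = -((1 - √x) * (√x + 1)) by linear_combination -hyy, abs_neg, abs_mul,
      abs_of_pos (by positivity : 0 < √x + 1)]
  rw [hdiff, abs_div, abs_of_pos hy0, div_le_iff₀ hy0, hx1]
  nlinarith [abs_nonneg (1 - √x)]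

theorem IsSelfAdjoint.exists_mul_mul_eq_one {A : Type*} [CStarAlgebra A] {t : A}
    (ht : IsSelfAdjoint t) (h : ‖t - 1‖ ≤ 1 / 2) :
    ∃ s, IsSelfAdjoint s ∧ s * t * s = 1 ∧ ‖s - 1‖ ≤ ‖t - 1‖ := by
  have hspec : ∀ x ∈ spectrum ℝ t, |x - 1| ≤ ‖t - 1‖ := fun x hx => by
    simpa [cfc_sub (fun x : ℝ => x) (fun _ => 1) t, cfc_id' ℝ t, cfc_const_one ℝ t] using
      norm_apply_le_norm_cfc (fun x : ℝ => x - 1) t hx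
  have hhalf : ∀ x ∈ spectrum ℝ t, 1 / 2 ≤ x := fun x hx => by
    linarith [(abs_le.mp ((hspec x hx).trans h)).1]
  have hf : ContinuousOn (fun x : ℝ => (√x)⁻¹) (spectrum ℝ t) :=
    Real.continuous_sqrt.continuousOn.inv₀ fun x hx => by
      have := hhalf x hx
      positivity
  refine ⟨cfc (fun x : ℝ => (√x)⁻¹) t, cfc_predicate _ _, ?_, ?_⟩
  · have hprod : cfc (fun x : ℝ => (√x)⁻¹) t * t * cfc (fun x : ℝ => (√x)⁻¹) t =
        cfc (fun x : ℝ => (√x)⁻¹ * x * (√x)⁻¹) t := by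
      rw [cfc_mul (fun x : ℝ => (√x)⁻¹ * x) _ t (hf.mul continuousOn_id) hf,
        cfc_mul _ (fun x : ℝ => x) t hf, cfc_id' ℝ t]
    rw [hprod, ← cfc_const_one ℝ t]
    refine cfc_congr fun x hx => ?_
    have hx0 : 0 < x := by linarith [hhalf x hx]
    have := Real.mul_self_sqrt hx0.le
    field_simp
    linarith
  · nth_rewrite 1 [← cfc_const_one ℝ t]
    rw [← cfc_sub _ _ t hf]
    exact norm_cfc_le (norm_nonneg _) fun x hx =>
      (Real.abs_inv_sqrt_sub_one_le (hhalf x hx)).trans (hspec x hx)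

namespace Matrix

variable {ι R : Type*} [Fintype ι]

theorem isSelfAdjoint_trace [AddCommMonoid R] [StarAddMonoid R] {X : Matrix ι ι R}
    (hX : IsSelfAdjoint X) : IsSelfAdjoint X.trace := by
  rw [isSelfAdjoint_iff, ← trace_conjTranspose, ← star_eq_conjTranspose, hX.star_eq]

variable [DecidableEq ι] [Semiring R]

theorem isSelfAdjoint_scalar [StarRing R] {s : R} (hs : IsSelfAdjoint s) :
    IsSelfAdjoint (scalar ι s) :=
  (isHermitian_diagonal_of_self_adjoint _ (funext fun _ => hs.star_eq)).isSelfAdjoint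

theorem trace_scalar_mul_mul_scalar (s : R) (X : Matrix ι ι R) :
    (scalar ι s * X * scalar ι s).trace = s * X.trace * s := by
  simp [trace, mul_diagonal, diagonal_mul, Finset.mul_sum, Finset.sum_mul]

end Matrix

section CStarNormOnMatrices

variable {A : Type*} [Ring A] [StarRing A] [Algebra ℂ A] {ι : Type} [Fintype ι]
  {N : Matrix ι ι A → ℝ}

/-- A type synonym on which `N` can serve as the norm, away from the product topology that
`Matrix ι ι A` already carries. -/
def MatrixWithNorm (_N : Matrix ι ι A → ℝ) : Type _ := Matrix ι ι A

instance [DecidableEq ι] : Ring (MatrixWithNorm N) := inferInstanceAs (Ring (Matrix ι ι A))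

instance [DecidableEq ι] : Algebra ℂ (MatrixWithNorm N) :=
  inferInstanceAs (Algebra ℂ (Matrix ι ι A))

namespace IsCStarNorm

def ringNorm (hN : IsCStarNorm N) : RingNorm (Matrix ι ι A) where
  toFun := N
  map_zero' := (hN.1 0).2 rfl
  add_le' := hN.2.1
  neg' x := by simpa using hN.2.2.1 (-1) x
  mul_le' := hN.2.2.2.1
  eq_zero_of_map_eq_zero' x := (hN.1 x).1

abbrev normedRing [DecidableEq ι] (hN : IsCStarNorm N) : NormedRing (MatrixWithNorm N) :=
  @RingNorm.toNormedRing (MatrixWithNorm N) _ hN.ringNorm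

abbrev normedAlgebra [DecidableEq ι] (hN : IsCStarNorm N) :
    @NormedAlgebra ℂ (MatrixWithNorm N) _ hN.normedRing.toSeminormedRing :=
  letI := hN.normedRing
  { norm_smul_le := fun c x => (hN.2.2.1 c x).le }

end IsCStarNorm

end CStarNormOnMatrices

theorem IsCStarNorm.apply_scalar_le_norm {A : Type*} [CStarAlgebra A] {ι : Type} [Fintype ι]
    [DecidableEq ι] {N : Matrix ι ι A → ℝ} (hN : IsCStarNorm N) {b : A} (hb : IsSelfAdjoint b) :
    N (Matrix.scalar ι b) ≤ ‖b‖ := by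
  let _ := hN.normedRing
  let _ := hN.normedAlgebra
  let ψ : A →ₐ[ℂ] MatrixWithNorm N := (Matrix.diagonalAlgHom ℂ).comp (Pi.constAlgHom ℂ ι A)
  have hpow : ∀ k : ℕ, ‖ψ b ^ 2 ^ k‖ = ‖ψ b‖ ^ 2 ^ k :=
    (Matrix.isSelfAdjoint_scalar hb).apply_pow_two_pow hN.2.2.2.2
  have := (nnnorm_le_spectralRadius_of_pow_two_pow hpow).trans
    ((ψ.spectralRadius_apply_le b).trans_eq hb.spectralRadius_eq_nnnorm)
  exact_mod_cast this

theorem stmt_14_general (n : ℕ) (δ : ℝ) (hδ : 0 < δ) :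
    ∃ ε : ℝ, 0 < ε ∧
      ∀ (A : Type u) [CStarAlgebra A],
        ∀ N : Matrix (Fin n) (Fin n) A → ℝ, IsCStarNorm N →
        ∀ X : Matrix (Fin n) (Fin n) A,
          (∃ w : Matrix (Fin n) (Fin n) A, X = star w * w) → N X ≤ 1 → ‖(∑ i, X i i) - 1‖ ≤ ε →
          ∃ X' : Matrix (Fin n) (Fin n) A,
            (∃ w : Matrix (Fin n) (Fin n) A, X' = star w * w) ∧ (∑ i, X' i i) = 1 ∧ N (X - X') ≤ δ := by
  set ε := min (δ / 3) (1 / 2)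
  have hε0 : 0 < ε := by positivity
  have hεδ : ε ≤ δ / 3 := min_le_left _ _
  have hε2 : ε ≤ 1 / 2 := min_le_right _ _
  refine ⟨ε, hε0, fun A _ N hN X ⟨w, hXw⟩ hX htr => ?_⟩
  have htrace : IsSelfAdjoint X.trace :=
    Matrix.isSelfAdjoint_trace (hXw ▸ IsSelfAdjoint.star_mul_self w)
  obtain ⟨s, hs, hsts, hs1⟩ := htrace.exists_mul_mul_eq_one (htr.trans hε2)
  set D := Matrix.scalar (Fin n) s
  have hD : IsSelfAdjoint D := Matrix.isSelfAdjoint_scalar hs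
  have h1D : N (1 - D) ≤ ε := by
    have h := hN.apply_scalar_le_norm ((IsSelfAdjoint.one A).sub hs)
    rw [map_sub, map_one, norm_sub_rev] at h
    exact h.trans (hs1.trans htr)
  have hN0 : ∀ Y, 0 ≤ N Y := apply_nonneg hN.ringNorm
  refine ⟨D * X * D, ⟨w * D, ?_⟩, ?_, ?_⟩
  · rw [star_mul, hD.star_eq, hXw]
    simp only [mul_assoc]
  · exact (Matrix.trace_scalar_mul_mul_scalar s X).trans hsts
  · calc N (X - D * X * D) ≤ N (1 - D) * N X * (2 + N (1 - D)) :=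
          map_sub_mul_mul_le hN.ringNorm X D
      _ ≤ ε * 1 * (2 + ε) := by gcongr <;> linarith [hN0 X, hN0 (1 - D)]
      _ ≤ δ := by nlinarith

/-- for every `n ≥ 1` and `δ > 0` there is `ε > 0` such that for every
unital C*-algebra `A` and every positive `X ∈ Mₙ(A)` with `‖X‖ ≤ 1` and
`‖Σᵢ Xᵢᵢ - 1‖ ≤ ε`, there is a positive `X' ∈ Mₙ(A)` with `Σᵢ X'ᵢᵢ = 1` and
`‖X - X'‖ ≤ δ`.  Positivity in `Mₙ(A)` is witnessed by a `w* w` decomposition and the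
C*-norm of `Mₙ(A)` is the unique norm satisfying `IsCStarNorm`. -/
theorem stmt_14 (n : ℕ) (hn : 1 ≤ n) (δ : ℝ) (hδ : 0 < δ) :
    ∃ ε : ℝ, 0 < ε ∧
      ∀ (A : Type u) [CStarAlgebra A],
        ∀ N : Matrix (Fin n) (Fin n) A → ℝ, IsCStarNorm N →
        ∀ X : Matrix (Fin n) (Fin n) A,
          (∃ w : Matrix (Fin n) (Fin n) A, X = star w * w) → N X ≤ 1 → ‖(∑ i, X i i) - 1‖ ≤ ε →
          ∃ X' : Matrix (Fin n) (Fin n) A,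
            (∃ w : Matrix (Fin n) (Fin n) A, X' = star w * w) ∧ (∑ i, X' i i) = 1 ∧ N (X - X') ≤ δ :=
  stmt_14_general n δ hδ
end

section
/- Let E = { x ∈ M₃(ℂ) : x₁₃ = 0 and x₃₁ = 0 }. There is no completely positive linear map p : M₃(ℂ) → M₃(ℂ) such that p(x) ∈ E for every x ∈ M₃(ℂ) and p(x) = x for every x ∈ E. In other words, there is no completely positive projection of M₃(ℂ) onto E. -/
open scoped ComplexOrder

/-!
The Choi matrix `∑ Eᵢⱼ ⊗ φ(Eᵢⱼ)` of a completely positive `φ` is positive semidefinite, hence so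
is its compression `[φ(Eᵢⱼ)ᵢⱼ]` to the coordinates `(i, i)`. For a projection onto `E` this
compression is `[[1, 1, 0], [1, 1, 1], [0, 1, 1]]`, which takes the value `-1` at `(1, -1, 1)`.
-/

open Matrix

def maxEntangled (n : ℕ) : Fin n × Fin n → ℂ := fun ik => if ik.1 = ik.2 then 1 else 0

lemma block_vecMulVec_maxEntangled {n : ℕ} (i j : Fin n) :
    (of fun a b =>
      vecMulVec (maxEntangled n) (star (maxEntangled n)) (i, a) (j, b)) = single i j 1 := by
  ext a b
  by_cases hia : i = a <;> by_cases hjb : j = b <;> simp [maxEntangled, vecMulVec, single, hia, hjb]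

namespace IsCompletelyPositiveMat

theorem posSemidef_of_single_apply {n : ℕ}
    {φ : Matrix (Fin n) (Fin n) ℂ → Matrix (Fin n) (Fin n) ℂ} (hφ : IsCompletelyPositiveMat φ) :
    (of fun i j => φ (single i j 1) i j).PosSemidef := by
  have hchoi := (hφ n _ (posSemidef_vecMulVec_self_star (maxEntangled n))).submatrix
    fun i => (i, i)
  convert hchoi using 1
  ext i j
  simp only [submatrix_apply, matAmp, of_apply, block_vecMulVec_maxEntangled]

end IsCompletelyPositiveMat

lemma not_posSemidef_path3 :
    ¬ (!![1, 1, 0; 1, 1, 1; 0, 1, 1] : Matrix (Fin 3) (Fin 3) ℂ).PosSemidef := by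
  intro h
  have hneg : star ![1, -1, 1] ⬝ᵥ ((!![1, 1, 0; 1, 1, 1; 0, 1, 1] : Matrix (Fin 3) (Fin 3) ℂ) *ᵥ
      ![1, -1, 1]) = -1 := by
    simp [dotProduct, mulVec, Fin.sum_univ_three]
  have hnonneg := h.dotProduct_mulVec_nonneg ![1, -1, 1]
  rw [hneg] at hnonneg
  norm_num at hnonneg

/-- there is no completely positive linear projection of `M₃(ℂ)` onto the
operator system `E = { x ∈ M₃(ℂ) : x₁₃ = x₃₁ = 0 }`. -/
theorem stmt_16 :
    ¬ ∃ p : Matrix (Fin 3) (Fin 3) ℂ →ₗ[ℂ] Matrix (Fin 3) (Fin 3) ℂ,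
      IsCompletelyPositiveMat (⇑p) ∧
      (∀ x, p x 0 2 = 0 ∧ p x 2 0 = 0) ∧
      (∀ x : Matrix (Fin 3) (Fin 3) ℂ, x 0 2 = 0 → x 2 0 = 0 → p x = x) := by
  rintro ⟨p, hcp, hE, hfix⟩
  apply not_posSemidef_path3
  convert hcp.posSemidef_of_single_apply using 1
  ext i j
  fin_cases i <;> fin_cases j <;> simp [hfix, (hE _).1, (hE _).2, single]
end
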